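/- Fix constants a > 0, b > 0 and a parameter ρ > 0, and let μ be any probability measure on ℂ. Then the MVU filter averaged zeroth-order error probability is strictly smaller than that of the MMSE filter: ∫ P0(f_MVU, h) dμ(h) < ∫ P0(f_MMSE, h) dμ(h), where f_MVU = x/‖x‖² and f_MMSE = ρ·x/(ρ‖x‖² + σw²). In particular the MMSE estimator is not optimal for minimizing the average [P_e]_0 (Proposition 8). -/

import Mathlib

open MeasureTheory

/-- `φ(f) = fᴴ x = Σᵢ conj(fᵢ)·xᵢ`. -/
noncomputable def phi {B : ℕ} (x f : Fin B → ℂ) : ℂ :=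
  ∑ i, (starRingEnd ℂ) (f i) * x i

/-- Squared Euclidean norm `‖f‖² = Σᵢ |fᵢ|²`. -/
noncomputable def nsq {B : ℕ} (f : Fin B → ℂ) : ℝ :=
  ∑ i, Complex.normSq (f i)

/-- Zeroth-order symbol-estimate MSE of the ZF equalizer for channel `h`. -/
noncomputable def Mdc {B : ℕ} (σx2 σw2 : ℝ) (h : ℂ) (x f : Fin B → ℂ) : ℝ :=
  (σx2 * (Complex.normSq h * Complex.normSq (phi x f - 1) + σw2 * nsq f) + σw2) /
    (Complex.normSq h * Complex.normSq (phi x f) + σw2 * nsq f)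

/-- Standard Gaussian tail function `Q(u) = (1/√(2π)) ∫_u^∞ e^{−t²/2} dt`. -/
noncomputable def Qfun (u : ℝ) : ℝ :=
  (Real.sqrt (2 * Real.pi))⁻¹ * ∫ t in Set.Ioi u, Real.exp (-t ^ 2 / 2)

/-- Zeroth-order error probability `[P_e]₀ = a·Q(b·√(σx²/M_dc(f, h)))`. -/
noncomputable def P0dc {B : ℕ} (a b σx2 σw2 : ℝ) (h : ℂ) (x f : Fin B → ℂ) : ℝ :=
  a * Qfun (b * Real.sqrt (σx2 / Mdc σx2 σw2 h x f))

/-- The MVU channel-estimating filter `f_MVU = x / ‖x‖²`. -/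
noncomputable def fMVU {B : ℕ} (x : Fin B → ℂ) : Fin B → ℂ :=
  fun i => x i / (nsq x : ℂ)

/-- The MMSE channel-estimating filter `f_MMSE = ρ·x / (ρ‖x‖² + σw²)`. -/
noncomputable def fMMSE {B : ℕ} (σw2 ρ : ℝ) (x : Fin B → ℂ) : Fin B → ℂ :=
  fun i => (ρ : ℂ) * x i / ((ρ * nsq x + σw2 : ℝ) : ℂ)

/-!
Both filters are real multiples `t⁻¹ • x` of the training vector, with `t = ‖x‖²` for MVU and
`t = ‖x‖² + σw²/ρ` for MMSE. For such a filter
`M_dc · ‖x‖² (|h|²‖x‖² + σw²) = σx² (|h|² (‖x‖² - t)² + σw² ‖x‖²) + σw² t²`,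
which is strictly increasing in `t ≥ ‖x‖²`. Hence for every channel `h` the MVU filter has the
smaller MSE, and since `Q` is strictly decreasing, the smaller error probability. Both error
probabilities are bounded by `a`, so integrating the pointwise strict inequality against a
probability measure keeps it strict.
-/

lemma nsq_pos {B : ℕ} {x : Fin B → ℂ} (hx : x ≠ 0) : 0 < nsq x := by
  obtain ⟨i, hi⟩ := Function.ne_iff.mp hx
  exact Finset.sum_pos' (fun j _ => Complex.normSq_nonneg (x j))
    ⟨i, Finset.mem_univ i, Complex.normSq_pos.mpr hi⟩

lemma phi_ofReal_mul {B : ℕ} (x : Fin B → ℂ) (c : ℝ) :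
    phi x (fun i => (c : ℂ) * x i) = ((c * nsq x : ℝ) : ℂ) := by
  simp only [phi, nsq, map_mul, Complex.conj_ofReal, mul_assoc, ← Complex.normSq_eq_conj_mul_self]
  push_cast
  rw [Finset.mul_sum]

lemma nsq_ofReal_mul {B : ℕ} (x : Fin B → ℂ) (c : ℝ) :
    nsq (fun i => (c : ℂ) * x i) = c ^ 2 * nsq x := by
  simp only [nsq, Complex.normSq_mul, Complex.normSq_ofReal, Finset.mul_sum, sq]

lemma Mdc_ofReal_inv_mul {B : ℕ} (σx2 σw2 : ℝ) (h : ℂ) (x : Fin B → ℂ) {t : ℝ} (ht : 0 < t)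
    (hX : 0 < nsq x) (hσw : 0 < σw2) :
    Mdc σx2 σw2 h x (fun i => ((t⁻¹ : ℝ) : ℂ) * x i) =
      (σx2 * (Complex.normSq h * (t - nsq x) ^ 2 + σw2 * nsq x) + σw2 * t ^ 2) /
        (nsq x * (Complex.normSq h * nsq x + σw2)) := by
  have hr := Complex.normSq_nonneg h
  have hphi : phi x (fun i => ((t⁻¹ : ℝ) : ℂ) * x i) - 1 = ((t⁻¹ * nsq x - 1 : ℝ) : ℂ) := by
    rw [phi_ofReal_mul]; push_cast; ring
  rw [Mdc, hphi, phi_ofReal_mul, nsq_ofReal_mul, Complex.normSq_ofReal, Complex.normSq_ofReal,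
    div_eq_div_iff (by positivity) (by positivity)]
  field_simp
  ring

lemma fMVU_eq {B : ℕ} (x : Fin B → ℂ) :
    fMVU x = fun i => (((nsq x)⁻¹ : ℝ) : ℂ) * x i := by
  funext i; simp [fMVU, div_eq_mul_inv, mul_comm]

lemma fMMSE_eq {B : ℕ} (σw2 ρ : ℝ) (x : Fin B → ℂ) :
    fMMSE σw2 ρ x = fun i => ((((ρ * nsq x + σw2) / ρ)⁻¹ : ℝ) : ℂ) * x i := by
  funext i; rw [inv_div]; push_cast [fMMSE, div_eq_mul_inv]; ring

lemma Mdc_ofReal_inv_mul_lt {B : ℕ} {σx2 σw2 : ℝ} (h : ℂ) {x : Fin B → ℂ} {t₁ t₂ : ℝ}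
    (hX : 0 < nsq x) (hσx : 0 ≤ σx2) (hσw : 0 < σw2) (ht₁ : nsq x ≤ t₁) (ht : t₁ < t₂) :
    Mdc σx2 σw2 h x (fun i => ((t₁⁻¹ : ℝ) : ℂ) * x i) <
      Mdc σx2 σw2 h x (fun i => ((t₂⁻¹ : ℝ) : ℂ) * x i) := by
  have hr := Complex.normSq_nonneg h
  have ht₁_pos := hX.trans_le ht₁
  rw [Mdc_ofReal_inv_mul σx2 σw2 h x ht₁_pos hX hσw,
    Mdc_ofReal_inv_mul σx2 σw2 h x (ht₁_pos.trans ht) hX hσw]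
  gcongr ?_ / _
  exact add_lt_add_of_le_of_lt (by gcongr) (by gcongr)

lemma Mdc_fMVU_lt_Mdc_fMMSE {B : ℕ} (σx2 σw2 ρ : ℝ) (h : ℂ) (x : Fin B → ℂ)
    (hX : 0 < nsq x) (hσx : 0 ≤ σx2) (hσw : 0 < σw2) (hρ : 0 < ρ) :
    Mdc σx2 σw2 h x (fMVU x) < Mdc σx2 σw2 h x (fMMSE σw2 ρ x) := by
  rw [fMVU_eq, fMMSE_eq]
  refine Mdc_ofReal_inv_mul_lt h hX hσx hσw le_rfl ?_
  rw [lt_div_iff₀ hρ]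
  linarith

lemma Mdc_fMVU_pos {B : ℕ} (σx2 σw2 : ℝ) (h : ℂ) (x : Fin B → ℂ)
    (hX : 0 < nsq x) (hσx : 0 ≤ σx2) (hσw : 0 < σw2) :
    0 < Mdc σx2 σw2 h x (fMVU x) := by
  have hr := Complex.normSq_nonneg h
  rw [fMVU_eq, Mdc_ofReal_inv_mul σx2 σw2 h x hX hX hσw]
  positivity

lemma integrable_exp_neg_sq_div_two : Integrable fun t : ℝ => Real.exp (-t ^ 2 / 2) := by
  simpa [neg_div, div_eq_inv_mul] using integrable_exp_neg_mul_sq (b := (1 / 2 : ℝ)) (by norm_num)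

lemma Qfun_nonneg (u : ℝ) : 0 ≤ Qfun u :=
  mul_nonneg (by positivity) (setIntegral_nonneg measurableSet_Ioi fun t _ => (Real.exp_pos _).le)

lemma Qfun_le_one (u : ℝ) : Qfun u ≤ 1 := by
  have hfull : ∫ t, Real.exp (-t ^ 2 / 2) = Real.sqrt (2 * Real.pi) := by
    simpa [neg_div, div_eq_inv_mul, mul_comm] using integral_gaussian (1 / 2)
  have hle : ∫ t in Set.Ioi u, Real.exp (-t ^ 2 / 2) ≤ Real.sqrt (2 * Real.pi) :=
    hfull ▸ setIntegral_le_integral integrable_exp_neg_sq_div_two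
      (Filter.Eventually.of_forall fun t => (Real.exp_pos _).le)
  rw [Qfun, inv_mul_le_one₀ (by positivity)]
  exact hle

lemma Qfun_strictAnti : StrictAnti Qfun := by
  intro u v huv
  have : NeZero (volume.restrict (Set.Ioc u v)) :=
    ⟨by simp [Measure.restrict_eq_zero, huv]⟩
  have hmid : 0 < ∫ t in Set.Ioc u v, Real.exp (-t ^ 2 / 2) :=
    integral_exp_pos integrable_exp_neg_sq_div_two.integrableOn
  have hsplit : ∫ t in Set.Ioi u, Real.exp (-t ^ 2 / 2) =
      (∫ t in Set.Ioc u v, Real.exp (-t ^ 2 / 2)) + ∫ t in Set.Ioi v, Real.exp (-t ^ 2 / 2) := by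
    rw [← Set.Ioc_union_Ioi_eq_Ioi huv.le, setIntegral_union (Set.Ioc_disjoint_Ioi le_rfl)
      measurableSet_Ioi integrable_exp_neg_sq_div_two.integrableOn
      integrable_exp_neg_sq_div_two.integrableOn]
  unfold Qfun
  gcongr
  linarith

lemma P0dc_lt_P0dc_of_Mdc_lt {B : ℕ} {a b σx2 σw2 : ℝ} {h : ℂ} {x f g : Fin B → ℂ}
    (ha : 0 < a) (hb : 0 < b) (hσx : 0 < σx2) (hf : 0 < Mdc σx2 σw2 h x f)
    (hfg : Mdc σx2 σw2 h x f < Mdc σx2 σw2 h x g) :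
    P0dc a b σx2 σw2 h x f < P0dc a b σx2 σw2 h x g := by
  have hg : 0 < Mdc σx2 σw2 h x g := hf.trans hfg
  refine mul_lt_mul_of_pos_left (Qfun_strictAnti ?_) ha
  gcongr

lemma P0dc_integrable {B : ℕ} (a b σx2 σw2 : ℝ) (x f : Fin B → ℂ)
    (μ : Measure ℂ) [IsFiniteMeasure μ] :
    Integrable (fun h => P0dc a b σx2 σw2 h x f) μ := by
  refine .of_bound ?_ |a| (ae_of_all _ fun h => ?_)
  · exact (measurable_const.mul (Qfun_strictAnti.antitone.measurable.comp
      (by unfold Mdc; fun_prop))).aestronglyMeasurable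
  · rw [P0dc, norm_mul, Real.norm_of_nonneg (Qfun_nonneg _)]
    exact mul_le_of_le_one_right (abs_nonneg a) (Qfun_le_one _)

lemma integral_lt_integral_of_forall_lt {α : Type*} [MeasurableSpace α] {μ : Measure α} [NeZero μ]
    {f g : α → ℝ} (hf : Integrable f μ) (hg : Integrable g μ) (hfg : ∀ x, f x < g x) :
    ∫ x, f x ∂μ < ∫ x, g x ∂μ := by
  have hsupp : (Function.support fun x => g x - f x) = Set.univ :=
    Set.eq_univ_of_forall fun x => (sub_pos.mpr (hfg x)).ne'
  rw [← sub_pos, ← integral_sub hg hf, integral_pos_iff_support_of_nonneg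
    (fun x => (sub_pos.mpr (hfg x)).le) (hg.sub hf)]
  simp [hsupp, NeZero.ne μ]

theorem mvu_average_pe_strictly_smaller_than_mmse_general
    (B : ℕ) (x : Fin B → ℂ) (hx : x ≠ 0)
    (σx2 σw2 : ℝ) (hσx : 0 < σx2) (hσw : 0 < σw2)
    (a b : ℝ) (ha : 0 < a) (hb : 0 < b) (ρ : ℝ) (hρ : 0 < ρ)
    (μ : Measure ℂ) [IsProbabilityMeasure μ] :
    (∫ h, P0dc a b σx2 σw2 h x (fMVU x) ∂μ) <
      ∫ h, P0dc a b σx2 σw2 h x (fMMSE σw2 ρ x) ∂μ := by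
  have hX : 0 < nsq x := nsq_pos hx
  refine integral_lt_integral_of_forall_lt (P0dc_integrable _ _ _ _ _ _ μ)
    (P0dc_integrable _ _ _ _ _ _ μ) fun h => ?_
  exact P0dc_lt_P0dc_of_Mdc_lt ha hb hσx (Mdc_fMVU_pos σx2 σw2 h x hX hσx.le hσw)
    (Mdc_fMVU_lt_Mdc_fMMSE σx2 σw2 ρ h x hX hσx.le hσw hρ)

/-- Proposition 8: the MVU filter's averaged zeroth-order error probability is
strictly smaller than that of the MMSE filter, so the MMSE estimator is not
optimal for minimizing the average `[P_e]₀`. -/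
theorem mvu_average_pe_strictly_smaller_than_mmse
    (B : ℕ) (hB : 1 ≤ B) (x : Fin B → ℂ) (hx : x ≠ 0)
    (σx2 σw2 : ℝ) (hσx : 0 < σx2) (hσw : 0 < σw2)
    (a b : ℝ) (ha : 0 < a) (hb : 0 < b) (ρ : ℝ) (hρ : 0 < ρ)
    (μ : Measure ℂ) [IsProbabilityMeasure μ] :
    (∫ h, P0dc a b σx2 σw2 h x (fMVU x) ∂μ) <
      ∫ h, P0dc a b σx2 σw2 h x (fMMSE σw2 ρ x) ∂μ :=
  mvu_average_pe_strictly_smaller_than_mmse_general B x hx σx2 σw2 hσx hσw a b ha hb ρ hρ μ
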